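/- Let m = (m₀, m₁, …, mₙ) ∈ ℤ^{n+1} and fix i with m_i ≠ 0. Let ζ be a primitive |m_i|-th root of unity acting on ℂ^n by (z₁,…,zₙ) ↦ (ζ^{m₀}z₁, …, ζ^{m_{i-1}}z_i, ζ^{m_{i+1}}z_{i+1}, …, ζ^{mₙ}zₙ) (weights m_l for l ≠ i). The action of the cyclic group ⟨ζ⟩ at a point z = (z₁,…,zₙ) is free (i.e., ζ^k · z = z implies |m_i| divides k) if and only if gcd({m_l : l ≠ i, z_l ≠ 0}) is relatively prime to m_i. -/
import Mathlib


theorem stmt_11 (n : ℕ) (m : Fin (n + 1) → ℤ) (i : Fin (n + 1)) (hmi : m i ≠ 0)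
    (ζ : ℂ) (hζ : ζ = Complex.exp (2 * Real.pi * Complex.I / ((m i).natAbs : ℂ)))
    (z : Fin (n + 1) → ℂ) :
    (∀ k : ℤ, (∀ l : Fin (n + 1), l ≠ i → ζ ^ (m l * k) * z l = z l) →
        ((m i).natAbs : ℤ) ∣ k) ↔
      Nat.Coprime
        ((Finset.univ.filter fun l : Fin (n + 1) => l ≠ i ∧ z l ≠ 0).gcd
          fun l => (m l).natAbs)
        (m i).natAbs := by
  set N := (m i).natAbs with hNdef
  have hN : N ≠ 0 := Int.natAbs_ne_zero.mpr hmi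
  have hprim : IsPrimitiveRoot ζ N := by
    rw [hζ]; exact Complex.isPrimitiveRoot_exp N hN
  set S := Finset.univ.filter fun l : Fin (n + 1) => l ≠ i ∧ z l ≠ 0 with hS
  set g := S.gcd fun l => (m l).natAbs with hg
  have hgl : ∀ l ∈ S, g ∣ (m l).natAbs := fun l hl => Finset.gcd_dvd hl
  have key : ∀ (k : ℤ), (∀ l : Fin (n + 1), l ≠ i → ζ ^ (m l * k) * z l = z l) ↔
      (N : ℤ) ∣ (g : ℤ) * k := by
    intro k
    constructor
    · intro h
      have h1 : ∀ l ∈ S, N ∣ (m l).natAbs * k.natAbs := by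
        intro l hl
        simp only [hS, Finset.mem_filter] at hl
        have hz := hl.2.2
        have hzeq := h l hl.2.1
        have h2 : ζ ^ (m l * k) = 1 :=
          mul_right_cancel₀ hz (hzeq.trans (one_mul (z l)).symm)
        rw [hprim.zpow_eq_one_iff_dvd] at h2
        have h3 := Int.natAbs_dvd_natAbs.mpr h2
        simpa [Int.natAbs_mul] using h3
      have h2 : N ∣ g * k.natAbs := by
        have h3 : N ∣ S.gcd fun l => (m l).natAbs * k.natAbs :=
          Finset.dvd_gcd h1
        rwa [Finset.gcd_mul_right, normalize_eq] at h3
      have h4 : (N : ℤ) ∣ (g : ℤ) * (k.natAbs : ℤ) := by exact_mod_cast h2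
      rcases Int.natAbs_eq k with hk | hk
      · rwa [← hk] at h4
      · rw [← Int.dvd_neg, ← mul_neg, ← hk] at h4; exact h4
    · intro h l hli
      by_cases hz : z l = 0
      · simp [hz]
      have hlS : l ∈ S := by simp [hS, hli, hz]
      have hNd : (N : ℤ) ∣ m l * k := by
        have hd : (g : ℤ) ∣ m l :=
          (Int.natCast_dvd_natCast.mpr (hgl l hlS)).trans (Int.natAbs_dvd.mpr dvd_rfl)
        obtain ⟨c, hc⟩ := hd
        obtain ⟨e, he⟩ := h
        exact ⟨c * e, by rw [hc, mul_comm (g : ℤ) c, mul_assoc, he]; ring⟩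
      have h2 : ζ ^ (m l * k) = 1 := (hprim.zpow_eq_one_iff_dvd _).mpr hNd
      rw [h2, one_mul]
  constructor
  · intro H
    by_contra hc
    set d := Nat.gcd g N with hd
    have hd1 : d ≠ 1 := hc
    have hdN : d ∣ N := Nat.gcd_dvd_right g N
    have hdg : d ∣ g := Nat.gcd_dvd_left g N
    have hkey : (N : ℤ) ∣ (g : ℤ) * ((N / d : ℕ) : ℤ) := by
      obtain ⟨c, hc'⟩ := hdg
      have hnat : g * (N / d) = c * N := by
        rw [hc', mul_comm d c, mul_assoc, Nat.mul_div_cancel' hdN]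
      have : (N : ℤ) ∣ ((g * (N / d) : ℕ) : ℤ) := by
        rw [hnat]; exact_mod_cast Dvd.intro_left c rfl
      simpa using this
    have hH := H ((N / d : ℕ) : ℤ) ((key _).mpr hkey)
    have h3 : N ∣ N / d := Int.natCast_dvd_natCast.mp hH
    have hdvd : N / d ∣ N := Nat.div_dvd_of_dvd hdN
    have heq : N / d = N := Nat.dvd_antisymm hdvd h3
    rcases (Nat.div_eq_self.mp heq) with h | h
    · exact hN h
    · exact hd1 h
  · intro hcop k hk
    have h1 : (N : ℤ) ∣ (g : ℤ) * k := (key k).mp hk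
    have h2 : IsCoprime (N : ℤ) (g : ℤ) :=
      Nat.isCoprime_iff_coprime.mpr hcop.symm
    exact h2.dvd_of_dvd_mul_left h1
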